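/- arXiv:2604.16944 — 2 statements merged into one kernel-verified Lean document; each statement's English description precedes it below -/
import Mathlib

section
/- The map taking a mixed strategy σⁱ to its realization plan, γⁱ(σⁱ; ϖⁱ) = Σ_{sⁱ} sⁱ(ϖⁱ) σⁱ(sⁱ), where sⁱ(ϖⁱ) = Π_{a ∈ ϖⁱ} sⁱ(a) ∈ {0,1}, yields a function satisfying γⁱ(∅) = 1 and the flow-conservation constraints Σ_{a ∈ A(I)} γⁱ(ϖ_I a) = γⁱ(ϖ_I) at every information set I of player i, together with nonnegativity. -/
open scoped Classical in
/-- The realization plan induced by a mixed strategy satisfies the sequence-form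
linear constraints.  Here `J` indexes player `i`'s information sets, `A j` is the
action set at information set `j`, a pure strategy is an element of `∀ j, A j`,
a sequence is a finite set of (information set, action) pairs, and `lead j` is the
unique sequence leading to information set `j` (perfect recall); the hypothesis
`hpr` says an information set is not preceded by its own actions. -/
theorem realization_plan_constraints
    (J : Type*) [Fintype J] [DecidableEq J] (A : J → Type*) [∀ j, Fintype (A j)]
    [∀ j, DecidableEq (A j)]
    (lead : J → Finset (Σ j, A j))
    (hpr : ∀ (j : J) (a : A j), (⟨j, a⟩ : Σ j, A j) ∉ lead j)
    (σ : (∀ j, A j) → ℝ) (hσ : ∀ s, 0 ≤ σ s) (hσsum : ∑ s, σ s = 1) :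
    let γ : Finset (Σ j, A j) → ℝ :=
      fun ϖ => ∑ s : ∀ j, A j, if ∀ p ∈ ϖ, s p.1 = p.2 then σ s else 0
    γ ∅ = 1 ∧
      (∀ j : J, ∑ a : A j, γ (insert ⟨j, a⟩ (lead j)) = γ (lead j)) ∧
      ∀ ϖ, 0 ≤ γ ϖ := by
  intro γ
  refine ⟨?_, ?_, ?_⟩
  · simpa [γ] using hσsum
  · intro j
    simp only [γ]
    rw [Finset.sum_comm]
    refine Finset.sum_congr rfl fun s _ => ?_
    by_cases h : ∀ p ∈ lead j, s p.1 = p.2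
    · rw [if_pos h, Finset.sum_eq_single (s j)]
      · rw [if_pos]
        intro p hp
        rcases Finset.mem_insert.1 hp with h1 | h2
        · subst h1; rfl
        · exact h p h2
      · intro b _ hb
        rw [if_neg]
        intro hall
        exact hb (hall ⟨j, b⟩ (Finset.mem_insert_self _ _)).symm
      · simp
    · rw [if_neg h]
      refine Finset.sum_eq_zero fun a _ => ?_
      rw [if_neg]
      intro hall
      exact h fun p hp => hall p (Finset.mem_insert_of_mem hp)
  · intro ϖ
    exact Finset.sum_nonneg fun s _ => by split <;> simp [hσ s]
end

section
/- Kuhn-type consistency: if γ is a strictly positive realization plan and σ(γ) is the induced mixed strategy via the behavioral product formula, then the realization plan induced back from σ(γ) equals γ; that is, for every sequence ϖ, Σ_{s : s(ϖ)=1} σ(γ; s) = γ(ϖ). -/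
/-- The valid sequences generated by the leading sequences of the information
sets: the empty sequence is a sequence, and any leading sequence extended by an
action at that information set is a sequence. -/
inductive IsSeq {J : Type*} {A : J → Type*} [DecidableEq J] [∀ j, DecidableEq (A j)]
    (lead : J → Finset (Σ j, A j)) : Finset (Σ j, A j) → Prop
  | empty : IsSeq lead ∅
  | extend (j : J) (a : A j) :
      IsSeq lead (lead j) → IsSeq lead (insert ⟨j, a⟩ (lead j))

/-- If `⟨j, b⟩` belongs to a valid sequence then it does not belong to `lead j`. -/
lemma IsSeq.notMem_lead {J : Type*} {A : J → Type*} [DecidableEq J] [∀ j, DecidableEq (A j)]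
    {lead : J → Finset (Σ j, A j)}
    (hpr : ∀ (j : J) (a : A j), (⟨j, a⟩ : Σ j, A j) ∉ lead j)
    {ϖ : Finset (Σ j, A j)} (h : IsSeq lead ϖ) :
    ∀ (j : J) (b : A j), (⟨j, b⟩ : Σ j, A j) ∈ ϖ → (⟨j, b⟩ : Σ j, A j) ∉ lead j := by
  induction h with
  | empty => simp
  | extend j' a' h ih =>
    intro j b hb
    rcases Finset.mem_insert.mp hb with h1 | h2
    · obtain ⟨rfl, h2⟩ := Sigma.mk.inj_iff.mp h1
      cases eq_of_heq h2
      exact hpr _ b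
    · exact ih j b h2

open scoped Classical in
/-- Kuhn-type consistency: the realization plan induced back from the mixed
strategy `σ(γ)` (behavioral product formula) equals `γ` on every valid sequence. -/
theorem kuhn_consistency
    (J : Type*) [Fintype J] [DecidableEq J] (A : J → Type*) [∀ j, Fintype (A j)]
    [∀ j, DecidableEq (A j)]
    (lead : J → Finset (Σ j, A j))
    (hpr : ∀ (j : J) (a : A j), (⟨j, a⟩ : Σ j, A j) ∉ lead j)
    (hfun : ∀ j : J, ∀ p ∈ lead j, ∀ q ∈ lead j, Sigma.fst p = Sigma.fst q → p = q)
    (hleadseq : ∀ j : J, IsSeq lead (lead j))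
    (γ : Finset (Σ j, A j) → ℝ)
    (hγpos : ∀ ϖ, 0 < γ ϖ)
    (hroot : γ ∅ = 1)
    (hflow : ∀ j : J, ∑ a : A j, γ (insert ⟨j, a⟩ (lead j)) = γ (lead j)) :
    ∀ ϖ : Finset (Σ j, A j), IsSeq lead ϖ →
      (∑ s : ∀ j, A j,
          if ∀ p ∈ ϖ, s p.1 = p.2 then
            ∏ j, γ (insert ⟨j, s j⟩ (lead j)) / γ (lead j)
          else 0) = γ ϖ := by
  classical
  -- rewrite the constrained sum over pure strategies as a product over `J`
  have key : ∀ V : Finset (Σ j, A j),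
      (∑ s : ∀ j, A j,
          if ∀ p ∈ V, s p.1 = p.2 then
            ∏ j, γ (insert ⟨j, s j⟩ (lead j)) / γ (lead j)
          else 0)
      = ∏ j, ∑ a ∈ Finset.univ.filter
            (fun a : A j => ∀ b : A j, (⟨j, b⟩ : Σ j, A j) ∈ V → a = b),
          γ (insert ⟨j, a⟩ (lead j)) / γ (lead j) := by
    intro V
    rw [Finset.prod_univ_sum, ← Finset.sum_filter]
    apply Finset.sum_congr _ (fun _ _ => rfl)
    ext s
    simp only [Finset.mem_filter, Finset.mem_univ, true_and, Fintype.mem_piFinset]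
    constructor
    · exact fun h j b hb => h ⟨j, b⟩ hb
    · exact fun h q hq => h q.1 q.2 (by simpa using hq)
  intro ϖ hϖ
  rw [key ϖ]
  induction hϖ with
  | empty =>
    rw [hroot]
    apply Finset.prod_eq_one
    intro j _
    have : (Finset.univ.filter
        (fun a : A j => ∀ b : A j, (⟨j, b⟩ : Σ j, A j) ∈ (∅ : Finset (Σ j, A j)) → a = b))
        = Finset.univ := by simp
    rw [this, ← Finset.sum_div, hflow j, div_self (hγpos (lead j)).ne']
  | extend j₀ a₀ h ih =>
    have hnm : ∀ b : A j₀, (⟨j₀, b⟩ : Σ j, A j) ∉ lead j₀ := fun b hb =>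
      IsSeq.notMem_lead hpr (hleadseq j₀) j₀ b hb hb
    have hto : (Finset.univ.filter
        (fun a : A j₀ => ∀ b : A j₀, (⟨j₀, b⟩ : Σ j, A j) ∈ lead j₀ → a = b))
        = Finset.univ := by
      apply Finset.filter_true_of_mem
      exact fun a _ b hb => absurd hb (hnm b)
    have htn : (Finset.univ.filter
        (fun a : A j₀ => ∀ b : A j₀,
          (⟨j₀, b⟩ : Σ j, A j) ∈ insert ⟨j₀, a₀⟩ (lead j₀) → a = b)) = {a₀} := by
      ext a
      simp only [Finset.mem_filter, Finset.mem_univ, true_and, Finset.mem_insert,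
        Finset.mem_singleton]
      constructor
      · intro h'
        exact h' a₀ (Or.inl rfl)
      · rintro rfl b hb
        rcases hb with h1 | h2
        · obtain ⟨-, h2⟩ := Sigma.mk.inj_iff.mp h1
          exact (eq_of_heq h2).symm
        · exact absurd h2 (hnm b)
    rw [Finset.prod_eq_mul_prod_sdiff_singleton_of_mem (Finset.mem_univ j₀)] at ih ⊢
    have hrest : (∏ j ∈ Finset.univ \ {j₀},
          ∑ a ∈ Finset.univ.filter
            (fun a : A j => ∀ b : A j,
              (⟨j, b⟩ : Σ j, A j) ∈ insert ⟨j₀, a₀⟩ (lead j₀) → a = b),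
          γ (insert ⟨j, a⟩ (lead j)) / γ (lead j))
        = ∏ j ∈ Finset.univ \ {j₀},
          ∑ a ∈ Finset.univ.filter
            (fun a : A j => ∀ b : A j, (⟨j, b⟩ : Σ j, A j) ∈ lead j₀ → a = b),
          γ (insert ⟨j, a⟩ (lead j)) / γ (lead j) := by
      apply Finset.prod_congr rfl
      intro j hj
      have hjne : j ≠ j₀ := by
        simpa using (Finset.mem_sdiff.mp hj).2
      congr 1
      ext a
      simp only [Finset.mem_filter, Finset.mem_univ, true_and, Finset.mem_insert]
      constructor
      · intro h' b hb
        exact h' b (Or.inr hb)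
      · intro h' b hb
        rcases hb with h1 | h2
        · exact absurd (congrArg Sigma.fst h1) hjne
        · exact h' b h2
    rw [htn, hrest, Finset.sum_singleton]
    rw [hto, ← Finset.sum_div, hflow j₀, div_self (hγpos (lead j₀)).ne', one_mul] at ih
    rw [ih, div_mul_cancel₀ _ (hγpos (lead j₀)).ne']
end
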